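/- arXiv:1402.2636 — 2 statements merged into one kernel-verified Lean document; each statement's English description precedes it below -/
import Mathlib

section
/- Let A, B be symmetric positive-definite n×n matrices with eigenvalues e^{α₁} ≥ ... ≥ e^{αₙ} and e^{β₁} ≥ ... ≥ e^{βₙ} respectively, and let e^{γ₁} ≥ ... ≥ e^{γₙ} be the eigenvalues of A^{1/2} B A^{1/2}. Then Σᵢ γᵢ² ≤ (sqrt(Σᵢ αᵢ²) + sqrt(Σᵢ βᵢ²))². -/
open Matrix Real

noncomputable def matFun {n : ℕ} (f : ℝ → ℝ) (A : Matrix (Fin n) (Fin n) ℝ) :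
    Matrix (Fin n) (Fin n) ℝ :=
  if hA : A.IsHermitian then
    (hA.eigenvectorUnitary : Matrix (Fin n) (Fin n) ℝ) *
      Matrix.diagonal (fun i => f (hA.eigenvalues i)) *
      (star (hA.eigenvectorUnitary : Matrix (Fin n) (Fin n) ℝ))
  else 0

/-- The logarithm of a positive-definite matrix, defined spectrally. -/
noncomputable def matLog {n : ℕ} (A : Matrix (Fin n) (Fin n) ℝ) :
    Matrix (Fin n) (Fin n) ℝ := matFun Real.log A

/-- The positive square root of a positive-definite matrix, defined spectrally. -/
noncomputable def matSqrt {n : ℕ} (A : Matrix (Fin n) (Fin n) ℝ) :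
    Matrix (Fin n) (Fin n) ℝ := matFun Real.sqrt A

/-- `A^{-1/2}` for a positive-definite matrix, defined spectrally. -/
noncomputable def matSqrtInv {n : ℕ} (A : Matrix (Fin n) (Fin n) ℝ) :
    Matrix (Fin n) (Fin n) ℝ := matFun (fun t => (Real.sqrt t)⁻¹) A

/-- The Hilbert–Schmidt (Frobenius) norm of a real square matrix. -/
noncomputable def hsNorm {n : ℕ} (T : Matrix (Fin n) (Fin n) ℝ) : ℝ :=
  Real.sqrt ((Tᵀ * T).trace)

/-- `dist(A,B) = ‖log (A^{-1/2} B A^{-1/2})‖_HS`. -/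
noncomputable def pdist {n : ℕ} (A B : Matrix (Fin n) (Fin n) ℝ) : ℝ :=
  hsNorm (matLog (matSqrtInv A * B * matSqrtInv A))

/-!
Write `α`, `β`, `γ` for the decreasingly sorted log-eigenvalues of `A`, `B` and
`C = A^{1/2} B A^{1/2}`. Since `det C = det A · det B`, the sums of `γ` and of `α + β` agree.
Compress `C` to the span of its top `k` eigenvectors, the columns of `V`; with `N = A^{1/2} V`,
`det (Vᵀ C V) = det (Nᵀ B N)` and `Nᵀ N = Vᵀ A V`. By the Cauchy–Binet formula,
`det (Wᵀ H W) ≤ (largest product of k eigenvalues of H) · det (Wᵀ W)`; applied to `(B, N)` and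
then to `(A, V)` this gives `∑_{i<k} γ i ≤ ∑_{i<k} (α i + β i)`. So `γ` is majorized by `α + β`,
hence `∑ γ² ≤ ∑ (α + β)²` (tangent lines of `t ↦ t²` and Abel summation), and Minkowski's
inequality finishes.
-/

open Finset Equiv

section OrderEmbOfFin

variable {m : Type*} [LinearOrder m] {k : ℕ}

theorem Finset.image_orderEmbOfFin_comp_perm (S : Finset m) (hS : S.card = k)
    (τ : Perm (Fin k)) : univ.image (S.orderEmbOfFin hS ∘ τ) = S := by
  rw [← image_image, image_univ_equiv, image_orderEmbOfFin_univ]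

theorem Function.Injective.exists_perm_eq_orderEmbOfFin_comp {p : Fin k → m}
    (hp : Function.Injective p) :
    ∃ (hS : (univ.image p).card = k) (τ : Perm (Fin k)),
      p = (univ.image p).orderEmbOfFin hS ∘ τ := by
  have hS : (univ.image p).card = k := by simp [card_image_of_injective univ hp]
  let e := (univ.image p).orderIsoOfFin hS
  let τ : Fin k → Fin k := fun i => e.symm ⟨p i, mem_image_of_mem p (mem_univ i)⟩
  have hτ : Function.Injective τ := fun i j h =>
    hp (by simpa [τ] using congrArg (fun x => (e x : m)) h)
  refine ⟨hS, Equiv.ofBijective τ hτ.bijective_of_finite, funext fun i => ?_⟩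
  simp [τ, e, ← coe_orderIsoOfFin_apply]

theorem Finset.sum_filter_injective_eq_sum_orderEmbOfFin_comp_perm [Fintype m]
    {M : Type*} [AddCommMonoid M] (f : (Fin k → m) → M) :
    ∑ p ∈ univ.filter Function.Injective, f p =
      ∑ S : {S : Finset m // S.card = k}, ∑ τ : Perm (Fin k), f (S.1.orderEmbOfFin S.2 ∘ τ) := by
  rw [← Fintype.sum_prod_type']
  symm
  refine sum_nbij (fun x => x.1.1.orderEmbOfFin x.1.2 ∘ x.2) ?_ ?_ ?_ (fun _ _ => rfl)
  · intro x _
    simpa using (x.1.1.orderEmbOfFin x.1.2).injective.comp x.2.injective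
  · rintro ⟨⟨S, hS⟩, τ⟩ - ⟨⟨S', hS'⟩, τ'⟩ - h
    obtain rfl : S = S' := by
      rw [← image_orderEmbOfFin_comp_perm S hS τ, ← image_orderEmbOfFin_comp_perm S' hS' τ']
      exact congrArg (univ.image ·) h
    simp only [Prod.mk.injEq, true_and]
    exact Equiv.ext fun i => (S.orderEmbOfFin hS).injective (congrFun h i)
  · intro p hp
    obtain ⟨hS, τ, hpτ⟩ := Function.Injective.exists_perm_eq_orderEmbOfFin_comp (by simpa using hp)
    exact ⟨(⟨_, hS⟩, τ), by simp, hpτ.symm⟩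

end OrderEmbOfFin

namespace Matrix

section CauchyBinet

variable {R : Type*} [CommRing R] {m : Type*} [Fintype m] {k : ℕ}

theorem det_mul_eq_sum_prod_mul_det_submatrix (A : Matrix (Fin k) m R) (B : Matrix m (Fin k) R) :
    det (A * B) = ∑ p : Fin k → m, (∏ i, A i (p i)) * det (B.submatrix p id) := by
  have hrows : det (A * B) =
      detRowAlternating (fun i => ∑ j, A i j • B j : Fin k → Fin k → R) := by
    congr 1; ext i l; simp [mul_apply, Finset.sum_apply]
  rw [hrows, ← AlternatingMap.coe_multilinearMap, MultilinearMap.map_sum]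
  refine sum_congr rfl fun p _ => ?_
  rw [MultilinearMap.map_smul_univ]
  rfl

/-- The Cauchy–Binet formula. -/
theorem det_mul_eq_sum_det_submatrix_mul_det_submatrix [LinearOrder m] (A : Matrix (Fin k) m R)
    (B : Matrix m (Fin k) R) :
    det (A * B) = ∑ S : {S : Finset m // S.card = k},
      det (A.submatrix id (S.1.orderEmbOfFin S.2)) *
        det (B.submatrix (S.1.orderEmbOfFin S.2) id) := by
  rw [det_mul_eq_sum_prod_mul_det_submatrix, ← sum_filter_of_ne (p := Function.Injective),
    sum_filter_injective_eq_sum_orderEmbOfFin_comp_perm]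
  · refine sum_congr rfl fun S _ => ?_
    set e := S.1.orderEmbOfFin S.2
    have hB : ∀ τ : Perm (Fin k),
        det (B.submatrix (e ∘ τ) id) = Perm.sign τ * det (B.submatrix e id) :=
      fun τ => by rw [← det_permute, submatrix_submatrix]; rfl
    simp_rw [hB, ← det_transpose (A.submatrix id e), det_apply', sum_mul]
    refine sum_congr rfl fun τ _ => ?_
    simp only [transpose_apply, submatrix_apply, id, Function.comp_apply]
    ring
  · intro p _ hp
    by_contra hinj
    obtain ⟨i, j, hij, hne⟩ := Function.not_injective_iff.mp hinj
    exact hp (by rw [det_zero_of_row_eq hne (by ext; simp [hij]), mul_zero])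

end CauchyBinet

section Real

variable {m : Type*} [Fintype m] {k : ℕ}

theorem det_transpose_mul_diagonal_mul_le [LinearOrder m] (W : Matrix m (Fin k) ℝ) (d : m → ℝ)
    {c : ℝ} (hc : ∀ S : Finset m, S.card = k → ∏ i ∈ S, d i ≤ c) :
    det (Wᵀ * diagonal d * W) ≤ c * det (Wᵀ * W) := by
  rw [det_mul_eq_sum_det_submatrix_mul_det_submatrix,
    det_mul_eq_sum_det_submatrix_mul_det_submatrix, mul_sum]
  refine sum_le_sum fun ⟨S, hS⟩ _ => ?_
  set e := S.orderEmbOfFin hS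
  have hprod : ∏ i, d (e i) = ∏ i ∈ S, d i := by
    conv_rhs => rw [← map_orderEmbOfFin_univ S hS]
    rw [prod_map]; rfl
  have hsub : (Wᵀ * diagonal d).submatrix id e = (W.submatrix e id)ᵀ * diagonal (d ∘ e) := by
    ext i j; simp [mul_diagonal]
  rw [hsub, det_mul, det_diagonal, ← transpose_submatrix, det_transpose, Function.comp_def, hprod]
  nlinarith [hc S hS, sq_nonneg (det (W.submatrix e id))]

theorem transpose_submatrix_mul_mul_submatrix (U X : Matrix m m ℝ) (g : Fin k → m) :
    (U.submatrix id g)ᵀ * X * U.submatrix id g = (Uᵀ * X * U).submatrix g g := by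
  rw [transpose_submatrix, ← submatrix_id_id X, ← submatrix_mul _ _ g id id Function.bijective_id,
    ← submatrix_mul _ _ g id g Function.bijective_id, submatrix_id_id]

namespace IsHermitian

variable [DecidableEq m] {H : Matrix m m ℝ}

theorem transpose_eigenvectorUnitary_mul_self (hH : H.IsHermitian) :
    (hH.eigenvectorUnitary : Matrix m m ℝ)ᵀ * hH.eigenvectorUnitary = 1 := by
  simpa [star_eq_conjTranspose] using Unitary.coe_star_mul_self hH.eigenvectorUnitary

theorem eigenvectorUnitary_mul_transpose_self (hH : H.IsHermitian) :
    (hH.eigenvectorUnitary : Matrix m m ℝ) * (hH.eigenvectorUnitary : Matrix m m ℝ)ᵀ = 1 := by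
  simpa [star_eq_conjTranspose] using Unitary.coe_mul_star_self hH.eigenvectorUnitary

theorem eq_eigenvectorUnitary_mul_diagonal_mul_transpose (hH : H.IsHermitian) :
    H = hH.eigenvectorUnitary * diagonal hH.eigenvalues *
      (hH.eigenvectorUnitary : Matrix m m ℝ)ᵀ := by
  conv_lhs => rw [hH.spectral_theorem]
  simp [star_eq_conjTranspose]

theorem transpose_eigenvectorUnitary_mul_mul_self (hH : H.IsHermitian) :
    (hH.eigenvectorUnitary : Matrix m m ℝ)ᵀ * H * hH.eigenvectorUnitary =
      diagonal hH.eigenvalues := by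
  set U := (hH.eigenvectorUnitary : Matrix m m ℝ)
  rw [congrArg (Uᵀ * · * U) hH.eq_eigenvectorUnitary_mul_diagonal_mul_transpose]
  simp only [Matrix.mul_assoc]
  rw [hH.transpose_eigenvectorUnitary_mul_self, Matrix.mul_one, ← Matrix.mul_assoc,
    hH.transpose_eigenvectorUnitary_mul_self, Matrix.one_mul]

theorem det_transpose_mul_mul_submatrix_eigenvectorUnitary (hH : H.IsHermitian)
    {g : Fin k → m} (hg : Function.Injective g) :
    det ((hH.eigenvectorUnitary.1.submatrix id g)ᵀ * H * hH.eigenvectorUnitary.1.submatrix id g) =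
      ∏ i, hH.eigenvalues (g i) := by
  rw [transpose_submatrix_mul_mul_submatrix, hH.transpose_eigenvectorUnitary_mul_mul_self,
    submatrix_diagonal _ _ hg, det_diagonal]
  rfl

theorem det_transpose_mul_submatrix_eigenvectorUnitary (hH : H.IsHermitian)
    {g : Fin k → m} (hg : Function.Injective g) :
    det ((hH.eigenvectorUnitary.1.submatrix id g)ᵀ * hH.eigenvectorUnitary.1.submatrix id g) =
      1 := by
  rw [← Matrix.mul_one (hH.eigenvectorUnitary.1.submatrix id g)ᵀ,
    transpose_submatrix_mul_mul_submatrix, Matrix.mul_one,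
    hH.transpose_eigenvectorUnitary_mul_self, submatrix_one _ hg, det_one]

end IsHermitian

theorem IsHermitian.det_transpose_mul_mul_le [LinearOrder m] {H : Matrix m m ℝ}
    (hH : H.IsHermitian) (V : Matrix m (Fin k) ℝ) {c : ℝ}
    (hc : ∀ S : Finset m, S.card = k → ∏ i ∈ S, hH.eigenvalues i ≤ c) :
    det (Vᵀ * H * V) ≤ c * det (Vᵀ * V) := by
  set U := (hH.eigenvectorUnitary : Matrix m m ℝ)
  have hconj : Vᵀ * H * V = (Uᵀ * V)ᵀ * diagonal hH.eigenvalues * (Uᵀ * V) := by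
    conv_lhs => rw [hH.eq_eigenvectorUnitary_mul_diagonal_mul_transpose]
    simp only [transpose_mul, transpose_transpose, Matrix.mul_assoc, U]
  have hgram : (Uᵀ * V)ᵀ * (Uᵀ * V) = Vᵀ * V := by
    rw [transpose_mul, transpose_transpose, Matrix.mul_assoc, ← Matrix.mul_assoc U,
      hH.eigenvectorUnitary_mul_transpose_self, Matrix.one_mul]
  rw [hconj, ← hgram]
  exact det_transpose_mul_diagonal_mul_le (Uᵀ * V) hH.eigenvalues hc

end Real

end Matrix

theorem Fin.val_le_of_strictMono {k n : ℕ} {f : Fin k → Fin n} (hf : StrictMono f) (i : Fin k) :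
    (i : ℕ) ≤ f i := by
  obtain ⟨i, hi⟩ := i
  induction i with
  | zero => exact Nat.zero_le _
  | succ i ih =>
    exact Nat.succ_le_of_lt ((ih (by omega)).trans_lt (hf (Fin.mk_lt_mk.mpr i.lt_succ_self)))

theorem Antitone.sum_le_sum_castLE {n k : ℕ} {α : Fin n → ℝ} (hα : Antitone α) (hk : k ≤ n)
    (S : Finset (Fin n)) (hS : S.card = k) :
    ∑ i ∈ S, α i ≤ ∑ i : Fin k, α (Fin.castLE hk i) := by
  set e := S.orderEmbOfFin hS
  calc ∑ i ∈ S, α i = ∑ i : Fin k, α (e i) := by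
        conv_lhs => rw [← map_orderEmbOfFin_univ S hS]
        rw [sum_map]; rfl
    _ ≤ ∑ i : Fin k, α (Fin.castLE hk i) :=
        sum_le_sum fun i _ => hα (Fin.le_def.mpr (Fin.val_le_of_strictMono e.strictMono i))

theorem sum_range_mul_nonneg_of_antitone {N : ℕ} {c d : ℕ → ℝ}
    (hc : ∀ i, i + 1 < N → c (i + 1) ≤ c i) (hd : ∀ k ≤ N, 0 ≤ ∑ i ∈ range k, d i)
    (htot : ∑ i ∈ range N, d i = 0) : 0 ≤ ∑ i ∈ range N, c i * d i := by
  have hparts := sum_range_by_parts c d N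
  simp only [smul_eq_mul, htot, mul_zero, zero_sub] at hparts
  rw [hparts, neg_nonneg]
  refine sum_nonpos fun i hi => mul_nonpos_of_nonpos_of_nonneg ?_ (hd _ ?_)
  · have := mem_range.mp hi
    linarith [hc i (by omega)]
  · have := mem_range.mp hi
    omega

theorem sum_range_sq_le_of_sum_range_le {N : ℕ} {x y : ℕ → ℝ}
    (hx : ∀ i, i + 1 < N → x (i + 1) ≤ x i)
    (hpart : ∀ k ≤ N, ∑ i ∈ range k, x i ≤ ∑ i ∈ range k, y i)
    (htot : ∑ i ∈ range N, x i = ∑ i ∈ range N, y i) :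
    ∑ i ∈ range N, x i ^ 2 ≤ ∑ i ∈ range N, y i ^ 2 := by
  have hcross : 0 ≤ ∑ i ∈ range N, x i * (y i - x i) :=
    sum_range_mul_nonneg_of_antitone hx
      (fun k hk => by simpa [sum_sub_distrib] using hpart k hk)
      (by simp [sum_sub_distrib, htot])
  have htangent : ∀ i, x i ^ 2 + 2 * (x i * (y i - x i)) ≤ y i ^ 2 :=
    fun i => by nlinarith [sq_nonneg (y i - x i)]
  calc ∑ i ∈ range N, x i ^ 2 ≤ ∑ i ∈ range N, (x i ^ 2 + 2 * (x i * (y i - x i))) := by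
        rw [sum_add_distrib, ← mul_sum]; linarith
    _ ≤ ∑ i ∈ range N, y i ^ 2 := sum_le_sum fun i _ => htangent i

theorem sum_sq_le_sum_sq_of_sum_castLE_le {n : ℕ} {x y : Fin n → ℝ} (hx : Antitone x)
    (hpart : ∀ k (hk : k ≤ n),
      ∑ i : Fin k, x (Fin.castLE hk i) ≤ ∑ i : Fin k, y (Fin.castLE hk i))
    (htot : ∑ i, x i = ∑ i, y i) :
    ∑ i, x i ^ 2 ≤ ∑ i, y i ^ 2 := by
  let extend : (Fin n → ℝ) → ℕ → ℝ := fun f i => if h : i < n then f ⟨i, h⟩ else 0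
  have hsum : ∀ (g : ℝ → ℝ) (f : Fin n → ℝ) (k : ℕ) (hk : k ≤ n),
      ∑ i : Fin k, g (f (Fin.castLE hk i)) = ∑ i ∈ range k, g (extend f i) := by
    intro g f k hk
    rw [← Fin.sum_univ_eq_sum_range]
    exact sum_congr rfl fun i _ => by simp [extend, i.2.trans_le hk, Fin.castLE]
  have hsum_univ : ∀ (g : ℝ → ℝ) (f : Fin n → ℝ),
      ∑ i, g (f i) = ∑ i ∈ range n, g (extend f i) :=
    fun g f => by simpa using hsum g f n le_rfl
  rw [hsum_univ (· ^ 2), hsum_univ (· ^ 2)]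
  refine sum_range_sq_le_of_sum_range_le (fun i hi => ?_) (fun k hk => ?_) ?_
  · simpa [extend, hi, (Nat.lt_succ_self i).trans hi] using hx (Fin.mk_le_mk.mpr i.le_succ)
  · exact (hsum id x k hk).symm.trans_le ((hpart k hk).trans_eq (hsum id y k hk))
  · exact (hsum_univ id x).symm.trans (htot.trans (hsum_univ id y))

theorem sum_add_sq_le_sq_sqrt_add_sqrt {ι : Type*} (s : Finset ι) (f g : ι → ℝ) :
    ∑ i ∈ s, (f i + g i) ^ 2 ≤ (√(∑ i ∈ s, f i ^ 2) + √(∑ i ∈ s, g i ^ 2)) ^ 2 := by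
  have hf : 0 ≤ ∑ i ∈ s, f i ^ 2 := sum_nonneg fun i _ => sq_nonneg (f i)
  have hg : 0 ≤ ∑ i ∈ s, g i ^ 2 := sum_nonneg fun i _ => sq_nonneg (g i)
  have hexpand : ∑ i ∈ s, (f i + g i) ^ 2 =
      ∑ i ∈ s, f i ^ 2 + 2 * ∑ i ∈ s, f i * g i + ∑ i ∈ s, g i ^ 2 := by
    simp only [add_sq, sum_add_distrib, mul_sum, mul_assoc]
  rw [hexpand, add_sq, Real.sq_sqrt hf, Real.sq_sqrt hg]
  nlinarith [Real.sum_mul_le_sqrt_mul_sqrt s f g]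

section MatSqrt

variable {n : ℕ} {A : Matrix (Fin n) (Fin n) ℝ}

theorem matSqrt_eq (hA : A.IsHermitian) :
    matSqrt A = hA.eigenvectorUnitary * diagonal (fun i => √(hA.eigenvalues i)) *
      (hA.eigenvectorUnitary : Matrix (Fin n) (Fin n) ℝ)ᵀ := by
  rw [matSqrt, matFun, dif_pos hA, star_eq_conjTranspose, conjTranspose_eq_transpose_of_trivial]

theorem transpose_matSqrt (hA : A.IsHermitian) : (matSqrt A)ᵀ = matSqrt A := by
  rw [matSqrt_eq hA, transpose_mul, transpose_mul, transpose_transpose, diagonal_transpose,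
    Matrix.mul_assoc]

theorem matSqrt_mul_self (hA : A.PosSemidef) : matSqrt A * matSqrt A = A := by
  set U := (hA.1.eigenvectorUnitary : Matrix (Fin n) (Fin n) ℝ)
  set D := diagonal (fun i => √(hA.1.eigenvalues i))
  have hD : D * D = diagonal hA.1.eigenvalues := by
    rw [diagonal_mul_diagonal]
    exact congrArg diagonal (funext fun i => Real.mul_self_sqrt (hA.eigenvalues_nonneg i))
  calc matSqrt A * matSqrt A = U * (D * (Uᵀ * U) * D) * Uᵀ := by
        simp only [matSqrt_eq hA.1, Matrix.mul_assoc, U, D]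
    _ = A := by
        rw [hA.1.transpose_eigenvectorUnitary_mul_self, Matrix.mul_one, hD,
          ← hA.1.eq_eigenvectorUnitary_mul_diagonal_mul_transpose]

theorem det_transpose_mul_matSqrt_mul_mul_le {k : ℕ} {B : Matrix (Fin n) (Fin n) ℝ}
    (hA : A.PosSemidef) (hB : B.IsHermitian) (V : Matrix (Fin n) (Fin k) ℝ) {a b : ℝ}
    (ha : ∀ S : Finset (Fin n), S.card = k → ∏ i ∈ S, hA.1.eigenvalues i ≤ a)
    (hb : ∀ S : Finset (Fin n), S.card = k → ∏ i ∈ S, hB.eigenvalues i ≤ b) (hb0 : 0 ≤ b) :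
    det (Vᵀ * (matSqrt A * B * matSqrt A) * V) ≤ b * (a * det (Vᵀ * V)) := by
  set N := matSqrt A * V
  have hNt : Nᵀ = Vᵀ * matSqrt A := by rw [transpose_mul, transpose_matSqrt hA.1]
  have hconj : Vᵀ * (matSqrt A * B * matSqrt A) * V = Nᵀ * B * N := by
    simp only [hNt, N, Matrix.mul_assoc]
  have hgram : Nᵀ * N = Vᵀ * A * V := by
    rw [hNt, Matrix.mul_assoc, ← Matrix.mul_assoc (matSqrt A), matSqrt_mul_self hA,
      Matrix.mul_assoc]
  calc det (Vᵀ * (matSqrt A * B * matSqrt A) * V) = det (Nᵀ * B * N) := by rw [hconj]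
    _ ≤ b * det (Nᵀ * N) := hB.det_transpose_mul_mul_le N hb
    _ ≤ b * (a * det (Vᵀ * V)) := by
        rw [hgram]
        exact mul_le_mul_of_nonneg_left (hA.1.det_transpose_mul_mul_le V ha) hb0

end MatSqrt

namespace Matrix.IsHermitian

variable {n : ℕ} {H : Matrix (Fin n) (Fin n) ℝ} {α : Fin n → ℝ} {σ : Perm (Fin n)}

theorem det_eq_exp_sum (hH : H.IsHermitian) (hσ : ∀ i, Real.exp (α i) = hH.eigenvalues (σ i)) :
    H.det = Real.exp (∑ i, α i) := by
  rw [hH.det_eq_prod_eigenvalues, Real.exp_sum, ← Equiv.prod_comp σ]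
  exact prod_congr rfl fun i _ => (hσ i).symm

theorem prod_eigenvalues_le_exp_sum_castLE (hH : H.IsHermitian) (hα : Antitone α)
    (hσ : ∀ i, Real.exp (α i) = hH.eigenvalues (σ i)) {k : ℕ} (hk : k ≤ n)
    (S : Finset (Fin n)) (hS : S.card = k) :
    ∏ i ∈ S, hH.eigenvalues i ≤ Real.exp (∑ i : Fin k, α (Fin.castLE hk i)) := by
  have hprod : ∏ i ∈ S, hH.eigenvalues i = Real.exp (∑ i ∈ S.map σ.symm.toEmbedding, α i) := by
    rw [Real.exp_sum, prod_map]
    exact prod_congr rfl fun i _ => by simp [hσ]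
  rw [hprod, Real.exp_le_exp]
  exact hα.sum_le_sum_castLE hk _ (by rw [card_map, hS])

end Matrix.IsHermitian

section LogEigenvalues

variable {n : ℕ} {A B : Matrix (Fin n) (Fin n) ℝ} {α β γ : Fin n → ℝ} {σA σB σC : Perm (Fin n)}

theorem sum_logEigenvalues_matSqrt_mul_mul_matSqrt (hA : A.PosDef) (hB : B.PosDef)
    (hC : (matSqrt A * B * matSqrt A).IsHermitian)
    (hσA : ∀ i, Real.exp (α i) = hA.1.eigenvalues (σA i))
    (hσB : ∀ i, Real.exp (β i) = hB.1.eigenvalues (σB i))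
    (hσC : ∀ i, Real.exp (γ i) = hC.eigenvalues (σC i)) :
    ∑ i, γ i = ∑ i, (α i + β i) := by
  have hdetA : A.det = (matSqrt A).det * (matSqrt A).det := by
    rw [← det_mul, matSqrt_mul_self hA.posSemidef]
  apply Real.exp_injective
  rw [← hC.det_eq_exp_sum hσC, sum_add_distrib, Real.exp_add, ← hA.1.det_eq_exp_sum hσA,
    ← hB.1.det_eq_exp_sum hσB, hdetA, det_mul, det_mul]
  ring

theorem sum_castLE_logEigenvalues_matSqrt_mul_mul_matSqrt_le (hA : A.PosDef) (hB : B.PosDef)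
    (hC : (matSqrt A * B * matSqrt A).IsHermitian) (hα : Antitone α) (hβ : Antitone β)
    (hσA : ∀ i, Real.exp (α i) = hA.1.eigenvalues (σA i))
    (hσB : ∀ i, Real.exp (β i) = hB.1.eigenvalues (σB i))
    (hσC : ∀ i, Real.exp (γ i) = hC.eigenvalues (σC i)) (k : ℕ) (hk : k ≤ n) :
    ∑ i : Fin k, γ (Fin.castLE hk i) ≤
      ∑ i : Fin k, (α (Fin.castLE hk i) + β (Fin.castLE hk i)) := by
  have hg : Function.Injective (σC ∘ Fin.castLE hk) :=
    σC.injective.comp (Fin.castLE_injective hk)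
  set V := hC.eigenvectorUnitary.1.submatrix id (σC ∘ Fin.castLE hk)
  have hcompress : det (Vᵀ * (matSqrt A * B * matSqrt A) * V) =
      Real.exp (∑ i : Fin k, γ (Fin.castLE hk i)) := by
    rw [hC.det_transpose_mul_mul_submatrix_eigenvectorUnitary hg, Real.exp_sum]
    simp [hσC]
  have h := det_transpose_mul_matSqrt_mul_mul_le hA.posSemidef hB.1 V
    (hA.1.prod_eigenvalues_le_exp_sum_castLE hα hσA hk)
    (hB.1.prod_eigenvalues_le_exp_sum_castLE hβ hσB hk) (Real.exp_pos _).le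
  rwa [hcompress, hC.det_transpose_mul_submatrix_eigenvectorUnitary hg, mul_one, ← Real.exp_add,
    Real.exp_le_exp, add_comm, ← sum_add_distrib] at h

end LogEigenvalues

theorem stmt4 {n : ℕ} (A B : Matrix (Fin n) (Fin n) ℝ)
    (hA : A.PosDef) (hB : B.PosDef)
    (hC : (matSqrt A * B * matSqrt A).IsHermitian)
    (α β γ : Fin n → ℝ) (hαanti : Antitone α) (hβanti : Antitone β) (hγanti : Antitone γ)
    (σA : Equiv.Perm (Fin n)) (hσA : ∀ i, Real.exp (α i) = hA.1.eigenvalues (σA i))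
    (σB : Equiv.Perm (Fin n)) (hσB : ∀ i, Real.exp (β i) = hB.1.eigenvalues (σB i))
    (σC : Equiv.Perm (Fin n)) (hσC : ∀ i, Real.exp (γ i) = hC.eigenvalues (σC i)) :
    ∑ i, (γ i) ^ 2 ≤
      (Real.sqrt (∑ i, (α i) ^ 2) + Real.sqrt (∑ i, (β i) ^ 2)) ^ 2 :=
  calc ∑ i, γ i ^ 2 ≤ ∑ i, (α i + β i) ^ 2 :=
        sum_sq_le_sum_sq_of_sum_castLE_le hγanti
          (sum_castLE_logEigenvalues_matSqrt_mul_mul_matSqrt_le hA hB hC hαanti hβanti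
            hσA hσB hσC)
          (sum_logEigenvalues_matSqrt_mul_mul_matSqrt hA hB hC hσA hσB hσC)
    _ ≤ _ := sum_add_sq_le_sq_sqrt_add_sqrt univ α β
end

section
/- Let A, B be symmetric positive-definite n×n matrices and define the curve γ(s) = A^{1/2} (A^{-1/2} B A^{-1/2})^s A^{1/2} for s ∈ [0,1], where the real matrix power is defined spectrally. Then γ(0)=A, γ(1)=B, and for every s ∈ [0,1], ‖γ'(s)‖_{γ(s)} = dist(A,B), where ‖C‖_M = ‖M^{-1/2} C M^{-1/2}‖_HS and dist(A,B) = ‖log(A^{-1/2} B A^{-1/2})‖_HS. In particular the length ∫₀¹ ‖γ'(s)‖_{γ(s)} ds equals dist(A,B). -/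
open Matrix Real

/-!
Write `S = A^{1/2}` and `M = A^{-1/2} B A^{-1/2}`, so that `γ(s) = S Mˢ S` and, differentiating
eigenvalue by eigenvalue, `γ'(s) = S Mˢ (log M) S`. Hence `γ'(s) γ(s)⁻¹ = S (log M) S⁻¹` does not
depend on `s`. For a positive-definite `G` and a symmetric `X`,
`‖G^{-1/2} X G^{-1/2}‖²_HS = tr ((X G⁻¹)²)`, a similarity invariant of `X G⁻¹`; so the speed of
`γ` is constantly `√(tr ((log M)²)) = dist(A, B)`.
-/

section

variable {n : ℕ}

section SpectralCalculus

variable {P : Matrix (Fin n) (Fin n) ℝ}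

local notation "U" hP => (Matrix.IsHermitian.eigenvectorUnitary hP : Matrix (Fin n) (Fin n) ℝ)

lemma matFun_of_isHermitian (hP : P.IsHermitian) (f : ℝ → ℝ) :
    matFun f P = (U hP) * diagonal (fun i => f (hP.eigenvalues i)) * star (U hP) :=
  dif_pos hP

lemma matFun_mul_matFun (hP : P.IsHermitian) (f g : ℝ → ℝ) :
    matFun f P * matFun g P = matFun (fun t => f t * g t) P := by
  have hU : star (U hP) * (U hP) = 1 := mem_unitaryGroup_iff'.mp hP.eigenvectorUnitary.2
  simp only [matFun_of_isHermitian hP]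
  calc _ = (U hP) * (diagonal (fun i => f (hP.eigenvalues i)) * (star (U hP) * (U hP)) *
          diagonal (fun i => g (hP.eigenvalues i))) * star (U hP) := by noncomm_ring
    _ = _ := by rw [hU, mul_one, diagonal_mul_diagonal]

lemma matFun_congr (hP : P.IsHermitian) {f g : ℝ → ℝ}
    (h : ∀ i, f (hP.eigenvalues i) = g (hP.eigenvalues i)) : matFun f P = matFun g P := by
  simp only [matFun_of_isHermitian hP, h]

lemma matFun_const_one (hP : P.IsHermitian) : matFun (fun _ => 1) P = 1 := by
  rw [matFun_of_isHermitian hP, diagonal_one, mul_one,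
    mem_unitaryGroup_iff.mp hP.eigenvectorUnitary.2]

lemma matFun_id (hP : P.IsHermitian) : matFun (fun t => t) P = P := by
  rw [matFun_of_isHermitian hP]
  conv_rhs => rw [hP.spectral_theorem]
  simp [Unitary.conjStarAlgAut_apply]

lemma matFun_mul_matFun_eq_one (hP : P.IsHermitian) {f g : ℝ → ℝ}
    (h : ∀ i, f (hP.eigenvalues i) * g (hP.eigenvalues i) = 1) :
    matFun f P * matFun g P = 1 := by
  rw [matFun_mul_matFun hP, matFun_congr hP (g := fun _ => 1) h, matFun_const_one hP]

lemma inv_matFun (hP : P.IsHermitian) {f g : ℝ → ℝ}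
    (h : ∀ i, f (hP.eigenvalues i) * g (hP.eigenvalues i) = 1) :
    (matFun f P)⁻¹ = matFun g P :=
  inv_eq_right_inv (matFun_mul_matFun_eq_one hP h)

lemma isHermitian_matFun (f : ℝ → ℝ) : (matFun f P).IsHermitian := by
  by_cases hP : P.IsHermitian
  · rw [matFun_of_isHermitian hP]
    simp [IsHermitian, Matrix.mul_assoc, star_eq_conjTranspose]
  · rw [matFun, dif_neg hP]
    exact isHermitian_zero

lemma posDef_matFun (hP : P.IsHermitian) {f : ℝ → ℝ} (hf : ∀ i, 0 < f (hP.eigenvalues i)) :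
    (matFun f P).PosDef := by
  rw [matFun_of_isHermitian hP]
  exact (IsUnit.posDef_star_right_conjugate_iff (Unitary.isUnit_coe)).mpr (PosDef.diagonal hf)

lemma matFun_apply (hP : P.IsHermitian) (f : ℝ → ℝ) (p q : Fin n) :
    matFun f P p q = ∑ k, (U hP) p k * f (hP.eigenvalues k) * (U hP) q k := by
  simp [matFun_of_isHermitian hP, mul_apply, diagonal_apply, star_apply]

end SpectralCalculus

lemma hasDerivAt_matFun_rpow_apply {P : Matrix (Fin n) (Fin n) ℝ} (hP : P.PosDef) (s : ℝ)
    (p q : Fin n) :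
    HasDerivAt (fun t => matFun (fun x => x ^ t) P p q)
      (matFun (fun x => x ^ s * log x) P p q) s := by
  simp only [matFun_apply hP.isHermitian]
  exact HasDerivAt.fun_sum fun k _ =>
    ((hasStrictDerivAt_const_rpow (hP.eigenvalues_pos k) s).hasDerivAt.const_mul _).mul_const _

lemma hasDerivAt_mul_mul_apply {l m o p : Type*} [Fintype m] [Fintype o]
    {F : ℝ → Matrix m o ℝ} {F' : Matrix m o ℝ} {s : ℝ}
    (hF : ∀ i j, HasDerivAt (fun t => F t i j) (F' i j) s) (S : Matrix l m ℝ) (T : Matrix o p ℝ)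
    (i : l) (j : p) :
    HasDerivAt (fun t => (S * F t * T) i j) ((S * F' * T) i j) s := by
  simp only [mul_apply]
  exact HasDerivAt.fun_sum fun q _ =>
    (HasDerivAt.fun_sum fun r _ => (hF r q).const_mul (S i r)).mul_const _

section SquareRoot

variable {A : Matrix (Fin n) (Fin n) ℝ}

lemma matSqrt_mul_matSqrt (hA : A.PosDef) : matSqrt A * matSqrt A = A := by
  rw [matSqrt, matFun_mul_matFun hA.isHermitian,
    matFun_congr hA.isHermitian (g := fun t => t) fun i => mul_self_sqrt (hA.eigenvalues_pos i).le,
    matFun_id hA.isHermitian]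

lemma matSqrt_mul_matSqrtInv (hA : A.PosDef) : matSqrt A * matSqrtInv A = 1 :=
  matFun_mul_matFun_eq_one hA.isHermitian fun i =>
    mul_inv_cancel₀ (sqrt_pos.mpr (hA.eigenvalues_pos i)).ne'

lemma matSqrtInv_mul_matSqrt (hA : A.PosDef) : matSqrtInv A * matSqrt A = 1 :=
  matFun_mul_matFun_eq_one hA.isHermitian fun i =>
    inv_mul_cancel₀ (sqrt_pos.mpr (hA.eigenvalues_pos i)).ne'

lemma matSqrtInv_mul_matSqrtInv (hA : A.PosDef) : matSqrtInv A * matSqrtInv A = A⁻¹ := by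
  conv_rhs => rw [← matFun_id hA.isHermitian]
  rw [inv_matFun hA.isHermitian (g := fun t => t⁻¹)
    fun i => mul_inv_cancel₀ (hA.eigenvalues_pos i).ne', matSqrtInv,
    matFun_mul_matFun hA.isHermitian]
  exact matFun_congr hA.isHermitian fun i => by
    rw [← mul_inv, mul_self_sqrt (hA.eigenvalues_pos i).le]

end SquareRoot

lemma posDef_mul_mul_self {S X : Matrix (Fin n) (Fin n) ℝ} (hS : S.IsHermitian) (hSu : IsUnit S)
    (hX : X.PosDef) : (S * X * S).PosDef := by
  have := (IsUnit.posDef_star_left_conjugate_iff hSu).mpr hX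
  rwa [star_eq_conjTranspose, hS.eq] at this

lemma isHermitian_mul_mul_self {S X : Matrix (Fin n) (Fin n) ℝ} (hS : S.IsHermitian)
    (hX : X.IsHermitian) : (S * X * S).IsHermitian := by
  have := isHermitian_conjTranspose_mul_mul S hX
  rwa [hS.eq] at this

lemma hsNorm_of_isHermitian {L : Matrix (Fin n) (Fin n) ℝ} (hL : L.IsHermitian) :
    hsNorm L = √((L * L).trace) := by
  rw [hsNorm, ← conjTranspose_eq_transpose_of_trivial, hL.eq]

lemma hsNorm_matSqrtInv_mul_mul {G X : Matrix (Fin n) (Fin n) ℝ} (hG : G.PosDef)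
    (hX : X.IsHermitian) :
    hsNorm (matSqrtInv G * X * matSqrtInv G) = √((X * G⁻¹ * (X * G⁻¹)).trace) := by
  have hN : (matSqrtInv G).IsHermitian := isHermitian_matFun _
  rw [hsNorm_of_isHermitian (isHermitian_mul_mul_self hN hX), ← matSqrtInv_mul_matSqrtInv hG]
  congr 1
  set N := matSqrtInv G
  calc (N * X * N * (N * X * N)).trace = (N * (X * (N * N) * X * N)).trace := by noncomm_ring
    _ = (X * (N * N) * X * N * N).trace := by rw [trace_mul_comm, Matrix.mul_assoc]
    _ = _ := by noncomm_ring

lemma trace_conj_mul_conj {S Si : Matrix (Fin n) (Fin n) ℝ} (h : Si * S = 1)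
    (L : Matrix (Fin n) (Fin n) ℝ) : (S * L * Si * (S * L * Si)).trace = (L * L).trace := by
  calc (S * L * Si * (S * L * Si)).trace = (S * (L * (Si * S) * L * Si)).trace := by noncomm_ring
    _ = (L * (Si * S) * L * (Si * S)).trace := by
        rw [trace_mul_comm, Matrix.mul_assoc (L * (Si * S) * L)]
    _ = _ := by rw [h, mul_one, mul_one]

lemma hsNorm_speed_conj_rpow {S Si M : Matrix (Fin n) (Fin n) ℝ} (hS : S.IsHermitian)
    (hSSi : S * Si = 1) (hSiS : Si * S = 1) (hM : M.PosDef) (s : ℝ) :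
    hsNorm (matSqrtInv (S * matFun (fun t => t ^ s) M * S) *
        (S * matFun (fun t => t ^ s * log t) M * S) *
        matSqrtInv (S * matFun (fun t => t ^ s) M * S)) = hsNorm (matLog M) := by
  have hpow : ∀ i, hM.isHermitian.eigenvalues i ^ s * hM.isHermitian.eigenvalues i ^ (-s) = 1 :=
    fun i => by rw [← rpow_add (hM.eigenvalues_pos i), add_neg_cancel, rpow_zero]
  have hG : (S * matFun (fun t => t ^ s) M * S).PosDef :=
    posDef_mul_mul_self hS (IsUnit.of_mul_eq_one Si hSSi)
      (posDef_matFun hM.isHermitian fun i => rpow_pos_of_pos (hM.eigenvalues_pos i) s)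
  have hGinv : (S * matFun (fun t => t ^ s) M * S)⁻¹ = Si * matFun (fun t => t ^ (-s)) M * Si := by
    rw [Matrix.mul_inv_rev, Matrix.mul_inv_rev, inv_eq_right_inv hSSi,
      inv_matFun hM.isHermitian (g := fun t => t ^ (-s)) hpow, Matrix.mul_assoc]
  have hlog : S * matFun (fun t => t ^ s * log t) M * S * (S * matFun (fun t => t ^ s) M * S)⁻¹ =
      S * matLog M * Si := by
    rw [hGinv]
    calc _ = S * (matFun (fun t => t ^ s * log t) M * (S * Si) *
          matFun (fun t => t ^ (-s)) M) * Si := by noncomm_ring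
      _ = _ := by
        rw [hSSi, mul_one, matFun_mul_matFun hM.isHermitian, matLog]
        congr 2
        refine matFun_congr hM.isHermitian fun i => ?_
        rw [mul_right_comm, hpow, one_mul]
  rw [hsNorm_matSqrtInv_mul_mul hG (isHermitian_mul_mul_self hS (isHermitian_matFun _)), hlog,
    trace_conj_mul_conj hSiS, hsNorm_of_isHermitian (L := matLog M) (isHermitian_matFun _)]

end

theorem stmt9 {n : ℕ} (A B : Matrix (Fin n) (Fin n) ℝ)
    (hA : A.PosDef) (hB : B.PosDef) :
    ∀ γ : ℝ → Matrix (Fin n) (Fin n) ℝ,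
      γ = (fun s => matSqrt A * matFun (fun t => t ^ s) (matSqrtInv A * B * matSqrtInv A) * matSqrt A) →
      γ 0 = A ∧ γ 1 = B ∧
      ∃ D : ℝ → Matrix (Fin n) (Fin n) ℝ,
        (∀ s ∈ Set.Icc (0 : ℝ) 1,
          (∀ i j, HasDerivAt (fun t => γ t i j) (D s i j) s) ∧
          hsNorm (matSqrtInv (γ s) * D s * matSqrtInv (γ s)) = pdist A B) ∧
        (∫ s in (0 : ℝ)..1, hsNorm (matSqrtInv (γ s) * D s * matSqrtInv (γ s))) = pdist A B := by
  rintro γ rfl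
  set S := matSqrt A
  set Si := matSqrtInv A
  set M := Si * B * Si
  have hS : S.IsHermitian := isHermitian_matFun _
  have hM : M.PosDef := posDef_mul_mul_self (isHermitian_matFun _)
    (IsUnit.of_mul_eq_one S (matSqrtInv_mul_matSqrt hA)) hB
  have hspeed :=
    hsNorm_speed_conj_rpow hS (matSqrt_mul_matSqrtInv hA) (matSqrtInv_mul_matSqrt hA) hM
  refine ⟨?_, ?_, fun s => S * matFun (fun t => t ^ s * log t) M * S,
    fun s _ => ⟨hasDerivAt_mul_mul_apply (hasDerivAt_matFun_rpow_apply hM s) S S, hspeed s⟩, ?_⟩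
  · simp only [rpow_zero, matFun_const_one hM.isHermitian, mul_one]
    exact matSqrt_mul_matSqrt hA
  · simp only [rpow_one, matFun_id hM.isHermitian]
    calc S * (Si * B * Si) * S = S * Si * B * (Si * S) := by noncomm_ring
      _ = B := by rw [matSqrt_mul_matSqrtInv hA, matSqrtInv_mul_matSqrt hA, one_mul, mul_one]
  · simp only [hspeed, intervalIntegral.integral_const, sub_zero, one_smul]
    rfl
end
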